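/- Let χ : ℝ → ℝ be defined near 0 by χ(t) = (3 + 2t³ + √3·√(3 + 4t³))^{1/3} (real positive roots). Then χ is infinitely differentiable on a neighbourhood of 0 and, for every integer n ≥ 1, its n-th derivative at 0 equals: if n = 3m for some integer m ≥ 1, χ^{(n)}(0) = 6^{1/3} · Σ_{k=1}^{m} Σ_{i=0}^{k} Σ_{l=0}^{k−i} (−1)^{k−i−l} · [2^{i−k}·n! / (3^i·i!·(m−i)!·l!·(k−i−l)!)] · (1/3)_k · h_{m−i}(l/2); and χ^{(n)}(0) = 0 if n is not divisible by 3. -/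

import Mathlib

/-- Falling factorial `(x)_p = x(x−1)⋯(x−p+1)` for real `x`. -/
noncomputable def fallFac (x : ℝ) (p : ℕ) : ℝ := ∏ i ∈ Finset.range p, (x - i)

/-- `h_p(x) = (4/3)^p · (x)_p`. -/
noncomputable def hFun (p : ℕ) (x : ℝ) : ℝ := (4 / 3 : ℝ) ^ p * fallFac x p

/-- `χ(t) = (3 + 2t³ + √3·√(3 + 4t³))^{1/3}` (real positive roots). -/
noncomputable def chiFun (t : ℝ) : ℝ :=
  (3 + 2 * t ^ 3 + Real.sqrt 3 * Real.sqrt (3 + 4 * t ^ 3)) ^ ((1 : ℝ) / 3)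

/-- The claimed value of `χ^{(3m)}(0)` for `m ≥ 1`. -/
noncomputable def chiDerivVal (m : ℕ) : ℝ :=
  (6 : ℝ) ^ ((1 : ℝ) / 3) *
    ∑ k ∈ Finset.Icc 1 m, ∑ i ∈ Finset.range (k + 1), ∑ l ∈ Finset.range (k - i + 1),
      (-1 : ℝ) ^ (k - i - l) *
        ((2 : ℝ) ^ (i : ℤ) / (2 : ℝ) ^ (k : ℤ) * (3 * m).factorial /
          (3 ^ i * i.factorial * (m - i).factorial * l.factorial * (k - i - l).factorial)) *
        fallFac (1 / 3) k * hFun (m - i) (l / 2)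

namespace ChiAux
open scoped ENNReal NNReal

noncomputable def bc (α : ℝ) (n : ℕ) : ℝ := fallFac α n / n.factorial

lemma fallFac_succ (α : ℝ) (n : ℕ) : fallFac α (n + 1) = fallFac α n * (α - n) :=
  Finset.prod_range_succ _ _

lemma bc_zero (α : ℝ) : bc α 0 = 1 := by simp [bc, fallFac]

lemma bc_succ (α : ℝ) (n : ℕ) : bc α (n + 1) = bc α n * (α - n) / (n + 1) := by
  have h1 : ((n + 1).factorial : ℝ) = (n + 1) * n.factorial := by
    push_cast [Nat.factorial_succ]; ring
  have h2 : (n.factorial : ℝ) ≠ 0 := Nat.cast_ne_zero.2 n.factorial_ne_zero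
  have h3 : ((n : ℝ) + 1) ≠ 0 := by positivity
  simp only [bc, fallFac_succ, h1]
  rw [div_mul_eq_mul_div, div_div, mul_comm (n.factorial : ℝ)]

lemma abs_bc_le_one {α : ℝ} (h : |α| ≤ 1) : ∀ k, |bc α k| ≤ 1 := by
  intro k
  induction k with
  | zero => simp [bc_zero]
  | succ n ih =>
    rw [bc_succ, abs_div, abs_mul]
    have h3 : |((n : ℝ) + 1)| = (n : ℝ) + 1 := abs_of_pos (by positivity)
    have h4 : |α - n| ≤ (n : ℝ) + 1 := by
      have := abs_sub_abs_le_abs_sub α (n : ℝ)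
      have h5 : |α - (n : ℝ)| ≤ |α| + |(n : ℝ)| := abs_sub _ _
      have : |(n : ℝ)| = n := abs_of_nonneg (by positivity)
      nlinarith [abs_nonneg (α - (n : ℝ))]
    rw [h3, div_le_one (by positivity)]
    calc |bc α n| * |α - n| ≤ 1 * ((n : ℝ) + 1) := by
          apply mul_le_mul ih h4 (abs_nonneg _) zero_le_one
      _ = (n : ℝ) + 1 := one_mul _

/-- Summability of `(n+1)^d * |bc α n| * ρ^n` for `0 ≤ ρ < 1`. -/
lemma summable_pow_mul_bc (α : ℝ) (d : ℕ) {ρ : ℝ} (h0 : 0 ≤ ρ) (h1 : ρ < 1) :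
    Summable (fun n : ℕ => ((n : ℝ) + 1) ^ d * |bc α n| * ρ ^ n) := by
  rcases eq_or_lt_of_le h0 with rfl | hρ
  · apply summable_of_ne_finset_zero (s := {0})
    intro n hn
    simp only [Finset.mem_singleton] at hn
    simp [zero_pow hn]
  set r := (ρ + 1) / 2 with hr
  have hr1 : r < 1 := by rw [hr]; linarith
  have hρr : ρ < r := by rw [hr]; linarith
  apply summable_of_ratio_norm_eventually_le hr1
  -- ratio tends to ρ < r
  have T : Filter.Tendsto
      (fun n : ℕ => ((n : ℝ) + 2) ^ d / ((n : ℝ) + 1) ^ d * ((|α| + n) / ((n : ℝ) + 1)) * ρ)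
      Filter.atTop (nhds ρ) := by
    have t1 : Filter.Tendsto (fun n : ℕ => (1 : ℝ) / (n + 1)) Filter.atTop (nhds 0) :=
      tendsto_one_div_add_atTop_nhds_zero_nat
    have t2 : Filter.Tendsto (fun n : ℕ => ((n : ℝ) + 2) / ((n : ℝ) + 1)) Filter.atTop (nhds 1) := by
      have : (fun n : ℕ => ((n : ℝ) + 2) / ((n : ℝ) + 1)) =
          fun n : ℕ => 1 + 1 / ((n : ℝ) + 1) := by
        funext n
        have : ((n : ℝ) + 1) ≠ 0 := by positivity
        field_simp
        ring
      rw [this]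
      simpa using tendsto_const_nhds.add t1
    have t3 : Filter.Tendsto (fun n : ℕ => (|α| + (n : ℝ)) / ((n : ℝ) + 1)) Filter.atTop (nhds 1) := by
      have : (fun n : ℕ => (|α| + (n : ℝ)) / ((n : ℝ) + 1)) =
          fun n : ℕ => 1 + (|α| - 1) * (1 / ((n : ℝ) + 1)) := by
        funext n
        have : ((n : ℝ) + 1) ≠ 0 := by positivity
        field_simp
        ring
      rw [this]
      have h6 := (t1.const_mul (|α| - 1)).const_add (1 : ℝ)
      simpa using h6
    have t4 : Filter.Tendsto (fun n : ℕ => (((n : ℝ) + 2) / ((n : ℝ) + 1)) ^ d)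
        Filter.atTop (nhds 1) := by
      simpa using t2.pow d
    have := (t4.mul t3).mul (tendsto_const_nhds (x := ρ))
    simp only [one_mul] at this
    convert this using 2 with n
    rw [div_pow]
  filter_upwards [T.eventually_lt_const hρr] with n hn
  have hbc : |bc α (n + 1)| = |bc α n| * |α - n| / ((n : ℝ) + 1) := by
    rw [bc_succ, abs_div, abs_mul, abs_of_pos (show (0:ℝ) < (n:ℝ)+1 by positivity)]
  have hαn : |α - (n:ℝ)| ≤ |α| + n := by
    have h5 := abs_sub α (n : ℝ)
    simpa [abs_of_nonneg (show (0:ℝ) ≤ (n:ℝ) by positivity)] using h5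
  have hpos : (0:ℝ) < ((n:ℝ)+1)^d := by positivity
  have hn' := hn
  rw [div_mul_eq_mul_div, div_mul_eq_mul_div, div_lt_iff₀ hpos] at hn'
  have key : ((n:ℝ)+2)^d * ((|α| + (n:ℝ))/((n:ℝ)+1)) * ρ ≤ r * ((n:ℝ)+1)^d := hn'.le
  have habs1 : (0:ℝ) ≤ ((n:ℝ)+1+1)^d * |bc α (n+1)| * ρ^(n+1) :=
    mul_nonneg (mul_nonneg (by positivity) (abs_nonneg _)) (by positivity)
  have habs2 : (0:ℝ) ≤ ((n:ℝ)+1)^d * |bc α n| * ρ^n :=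
    mul_nonneg (mul_nonneg (by positivity) (abs_nonneg _)) (by positivity)
  rw [Real.norm_eq_abs, Real.norm_eq_abs]
  push_cast
  rw [abs_of_nonneg habs1, abs_of_nonneg habs2]
  calc ((n:ℝ)+1+1)^d * |bc α (n+1)| * ρ^(n+1)
      = (((n:ℝ)+2)^d * (|α - (n:ℝ)|/((n:ℝ)+1)) * ρ) * (|bc α n| * ρ^n) := by
        rw [hbc]; ring
    _ ≤ (((n:ℝ)+2)^d * ((|α| + (n:ℝ))/((n:ℝ)+1)) * ρ) * (|bc α n| * ρ^n) := by
        apply mul_le_mul_of_nonneg_right _ (mul_nonneg (abs_nonneg _) (by positivity))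
        apply mul_le_mul_of_nonneg_right _ hρ.le
        apply mul_le_mul_of_nonneg_left _ (by positivity)
        exact (div_le_div_iff_of_pos_right (by positivity)).2 hαn
    _ ≤ (r * ((n:ℝ)+1)^d) * (|bc α n| * ρ^n) :=
        mul_le_mul_of_nonneg_right key (mul_nonneg (abs_nonneg _) (by positivity))
    _ = r * (((n:ℝ)+1)^d * |bc α n| * ρ^n) := by ring


/-- Bound on derivative terms. -/
lemma deriv_term_bound (α : ℝ) {y ρ : ℝ} (hρ : 0 < ρ) (hy : |y| ≤ ρ) (n : ℕ) :
    ‖bc α n * (↑n * y ^ (n - 1))‖ ≤ ((n : ℝ) + 1) ^ 2 * |bc α n| * ρ ^ n / ρ := by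
  rw [Real.norm_eq_abs, abs_mul, abs_mul, abs_pow]
  cases n with
  | zero => simp; positivity
  | succ m =>
    have hym : |y| ^ m ≤ ρ ^ m := pow_le_pow_left₀ (abs_nonneg _) hy m
    have hρm : (0:ℝ) ≤ ρ ^ m := by positivity
    have e : ((m + 1 : ℕ) : ℝ) + 1 = (m : ℝ) + 2 := by push_cast; ring
    have e2 : ρ ^ (m + 1) / ρ = ρ ^ m := by
      rw [pow_succ]; field_simp
    have e3 : ((m:ℝ)+2) ^ 2 * |bc α (m+1)| * ρ ^ (m+1) / ρ
        = ((m:ℝ)+2) ^ 2 * |bc α (m+1)| * ρ ^ m := by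
      rw [mul_div_assoc, e2]
    simp only [Nat.add_sub_cancel, Nat.cast_add, Nat.cast_one]
    have habs : |((m : ℝ) + 1)| = (m : ℝ) + 1 := abs_of_pos (by positivity)
    rw [habs, show ((m:ℝ) + 1 + 1) = (m:ℝ) + 2 from by ring, e3]
    calc |bc α (m+1)| * (((m:ℝ) + 1) * |y| ^ m)
        ≤ |bc α (m+1)| * (((m:ℝ) + 2) ^ 2 * ρ ^ m) := by
          apply mul_le_mul_of_nonneg_left _ (abs_nonneg _)
          calc ((m:ℝ) + 1) * |y| ^ m ≤ ((m:ℝ) + 1) * ρ ^ m :=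
                mul_le_mul_of_nonneg_left hym (by positivity)
            _ ≤ ((m:ℝ) + 2) ^ 2 * ρ ^ m := by
                apply mul_le_mul_of_nonneg_right _ hρm
                nlinarith
      _ = ((m:ℝ) + 2) ^ 2 * |bc α (m+1)| * ρ ^ m := by ring

lemma summable_bc (α : ℝ) {x : ℝ} (hx : |x| < 1) :
    Summable (fun n : ℕ => bc α n * x ^ n) := by
  apply Summable.of_norm_bounded (summable_pow_mul_bc α 0 (abs_nonneg x) hx)
  intro n
  rw [Real.norm_eq_abs, abs_mul, abs_pow]
  simp

lemma summable_deriv_bc (α : ℝ) {x : ℝ} (hx : |x| < 1) :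
    Summable (fun n : ℕ => bc α n * (↑n * x ^ (n - 1))) := by
  set ρ := (|x| + 1) / 2 with hρdef
  have hρpos : 0 < ρ := by positivity
  have hρ1 : ρ < 1 := by rw [hρdef]; linarith
  apply Summable.of_norm_bounded ((summable_pow_mul_bc α 2 hρpos.le hρ1).div_const ρ)
  exact deriv_term_bound α hρpos (by rw [hρdef]; linarith)

noncomputable def Sb (α : ℝ) (x : ℝ) : ℝ := ∑' n : ℕ, bc α n * x ^ n

lemma hasDerivAt_Sb (α : ℝ) {x : ℝ} (hx : |x| < 1) :
    HasDerivAt (Sb α) (∑' n : ℕ, bc α n * (↑n * x ^ (n - 1))) x := by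
  set ρ := (|x| + 1) / 2 with hρdef
  have hρpos : 0 < ρ := by positivity
  have hρ1 : ρ < 1 := by rw [hρdef]; linarith
  have hxρ : |x| < ρ := by rw [hρdef]; linarith
  have key := hasDerivAt_tsum_of_isPreconnected
    ((summable_pow_mul_bc α 2 hρpos.le hρ1).div_const ρ)
    (isOpen_Ioo (a := -ρ) (b := ρ)) (convex_Ioo _ _).isPreconnected
    (g := fun (n : ℕ) (y : ℝ) => bc α n * y ^ n)
    (g' := fun (n : ℕ) (y : ℝ) => bc α n * (↑n * y ^ (n - 1)))
    (y₀ := 0) (y := x) ?_ ?_ ?_ ?_ ?_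
  · exact key
  · intro n y _
    exact (hasDerivAt_pow n y).const_mul (bc α n)
  · intro n y hy
    apply deriv_term_bound α hρpos
    rw [abs_le]
    exact ⟨(hy.1).le, (hy.2).le⟩
  · rw [Set.mem_Ioo]; constructor <;> [linarith; linarith]
  · apply summable_of_ne_finset_zero (s := ({0} : Finset ℕ))
    intro n hn
    simp only [Finset.mem_singleton] at hn
    simp [zero_pow hn]
  · rw [Set.mem_Ioo]
    exact ⟨neg_lt_of_abs_lt hxρ, lt_of_abs_lt hxρ⟩

lemma ode_identity (α : ℝ) {x : ℝ} (hx : |x| < 1) :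
    (1 + x) * (∑' n : ℕ, bc α n * (↑n * x ^ (n - 1))) = α * Sb α x := by
  have hD := summable_deriv_bc α hx
  have hshift : Summable (fun n : ℕ => bc α (n + 1) * (↑(n + 1) * x ^ n)) := by
    have h2 := (summable_nat_add_iff 1).2 hD
    simpa using h2
  have hmul : Summable (fun n : ℕ => bc α n * ↑n * x ^ n) := by
    apply Summable.of_norm_bounded (summable_pow_mul_bc α 1 (abs_nonneg x) hx)
    intro n
    rw [Real.norm_eq_abs, abs_mul, abs_mul, abs_pow]
    have : |(n:ℝ)| = n := abs_of_nonneg (by positivity)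
    rw [this]
    calc |bc α n| * ↑n * |x| ^ n ≤ |bc α n| * ((n:ℝ)+1) * |x| ^ n := by
          apply mul_le_mul_of_nonneg_right _ (by positivity)
          apply mul_le_mul_of_nonneg_left _ (abs_nonneg _)
          linarith
      _ = ((n:ℝ)+1) ^ 1 * |bc α n| * |x| ^ n := by ring
  have e0 : (∑' n : ℕ, bc α n * (↑n * x ^ (n - 1)))
      = ∑' n : ℕ, bc α (n + 1) * (↑(n + 1) * x ^ n) := by
    rw [hD.tsum_eq_zero_add]
    simp
  have e1 : x * (∑' n : ℕ, bc α n * (↑n * x ^ (n - 1))) = ∑' n : ℕ, bc α n * ↑n * x ^ n := by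
    rw [← tsum_mul_left]
    congr 1
    funext n
    cases n with
    | zero => simp
    | succ m =>
      simp only [Nat.add_sub_cancel]
      rw [pow_succ]
      push_cast
      ring
  have key : ∀ n : ℕ, bc α (n + 1) * ↑(n + 1) = bc α n * (α - n) := by
    intro n
    rw [bc_succ]
    have : ((n : ℝ) + 1) ≠ 0 := by positivity
    push_cast
    field_simp
  calc (1 + x) * (∑' n : ℕ, bc α n * (↑n * x ^ (n - 1)))
      = (∑' n : ℕ, bc α n * (↑n * x ^ (n - 1))) + x * (∑' n : ℕ, bc α n * (↑n * x ^ (n-1))) := by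
        ring
    _ = (∑' n : ℕ, bc α (n + 1) * (↑(n + 1) * x ^ n)) + ∑' n : ℕ, bc α n * ↑n * x ^ n := by
        rw [e1, e0]
    _ = ∑' n : ℕ, (bc α (n + 1) * (↑(n + 1) * x ^ n) + bc α n * ↑n * x ^ n) := by
        rw [hshift.tsum_add hmul]
    _ = ∑' n : ℕ, α * (bc α n * x ^ n) := by
        congr 1
        funext n
        have := key n
        calc bc α (n + 1) * (↑(n + 1) * x ^ n) + bc α n * ↑n * x ^ n
            = (bc α (n + 1) * ↑(n + 1)) * x ^ n + bc α n * ↑n * x ^ n := by ring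
          _ = (bc α n * (α - n)) * x ^ n + bc α n * ↑n * x ^ n := by rw [this]
          _ = α * (bc α n * x ^ n) := by ring
    _ = α * Sb α x := by
        rw [tsum_mul_left, Sb]

theorem hasSum_binomial (α : ℝ) {x : ℝ} (hx : |x| < 1) :
    HasSum (fun n : ℕ => bc α n * x ^ n) ((1 + x) ^ α) := by
  suffices h : Sb α x = (1 + x) ^ α by
    rw [← h]
    exact (summable_bc α hx).hasSum
  have hd : ∀ y : ℝ, y ∈ Set.Ioo (-1 : ℝ) 1 →
      HasDerivAt (fun z => Sb α z * (1 + z) ^ (-α)) 0 y := by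
    intro y hy
    have hy1 : |y| < 1 := abs_lt.2 ⟨hy.1, hy.2⟩
    have hpos : (0:ℝ) < 1 + y := by have := abs_lt.1 hy1; linarith [this.1]
    have h1 := hasDerivAt_Sb α hy1
    have h2 : HasDerivAt (fun z : ℝ => (1 + z) ^ (-α)) (-α * (1 + y) ^ (-α - 1)) y := by
      have base : HasDerivAt (fun z : ℝ => 1 + z) 1 y := (hasDerivAt_id y).const_add 1
      have h3 := (Real.hasDerivAt_rpow_const (x := 1 + y) (p := -α)
        (Or.inl (ne_of_gt hpos))).comp y base
      have h3' : HasDerivAt (fun z : ℝ => (1 + z) ^ (-α)) (-α * (1 + y) ^ (-α - 1) * 1) y := h3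
      simpa using h3'
    have h4 := h1.mul h2
    have h4' : HasDerivAt (fun z => Sb α z * (1 + z) ^ (-α))
        ((∑' n : ℕ, bc α n * (↑n * y ^ (n - 1))) * (1 + y) ^ (-α)
          + Sb α y * (-α * (1 + y) ^ (-α - 1))) y := h4
    convert h4' using 1
    have hode := ode_identity α hy1
    have hrw : (1 + y) ^ (-α) = (1 + y) ^ (-α - 1) * (1 + y) := by
      conv_lhs => rw [show (-α : ℝ) = -α - 1 + 1 from by ring]
      rw [Real.rpow_add hpos, Real.rpow_one]
    rw [hrw]
    set D := ∑' n : ℕ, bc α n * (↑n * y ^ (n - 1))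
    have : (1 + y) * D = α * Sb α y := hode
    calc (0:ℝ) = ((1 + y) * D - α * Sb α y) * (1 + y) ^ (-α - 1) := by
          rw [this]; ring
      _ = D * ((1 + y) ^ (-α - 1) * (1 + y)) + Sb α y * (-α * (1 + y) ^ (-α - 1)) := by ring
  have hdiff : DifferentiableOn ℝ (fun z => Sb α z * (1 + z) ^ (-α)) (Set.Ioo (-1:ℝ) 1) :=
    fun y hy => ((hd y hy).differentiableAt).differentiableWithinAt
  have hconst := (convex_Ioo (-1:ℝ) 1).is_const_of_fderivWithin_eq_zero hdiff ?_ ?_ ?_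
    (x := x) (y := 0)
  · have hS0 : Sb α 0 = 1 := by
      rw [Sb, tsum_eq_single 0]
      · simp [bc_zero]
      · intro n hn
        simp [zero_pow hn]
    rw [hS0] at hconst
    simp only [add_zero, Real.one_rpow, mul_one] at hconst
    have hpos : (0:ℝ) < 1 + x := by have := abs_lt.1 hx; linarith [this.1]
    have h5 : (1 + x) ^ (-α) * (1 + x) ^ α = 1 := by
      rw [← Real.rpow_add hpos]
      simp
    calc Sb α x = Sb α x * ((1 + x) ^ (-α) * (1 + x) ^ α) := by rw [h5, mul_one]
      _ = (Sb α x * (1 + x) ^ (-α)) * (1 + x) ^ α := by ring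
      _ = 1 * (1 + x) ^ α := by rw [hconst]
      _ = (1 + x) ^ α := one_mul _
  · intro y hy
    have h6 : fderivWithin ℝ (fun z => Sb α z * (1 + z) ^ (-α)) (Set.Ioo (-1:ℝ) 1) y
        = fderiv ℝ (fun z => Sb α z * (1 + z) ^ (-α)) y :=
      fderivWithin_of_mem_nhds (isOpen_Ioo.mem_nhds hy)
    rw [h6, ((hd y hy).hasFDerivAt).fderiv]
    ext
    simp
  · exact Set.mem_Ioo.2 ⟨neg_lt_of_abs_lt hx, lt_of_abs_lt hx⟩
  · exact Set.mem_Ioo.2 ⟨by norm_num, by norm_num⟩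


/-! ### Power series representation machinery -/

def repOn (f : ℝ → ℝ) (a : ℕ → ℝ) (r : ℝ) : Prop :=
  ∀ ⦃u : ℝ⦄, |u| < r → HasSum (fun n : ℕ => a n * u ^ n) (f u)

open FormalMultilinearSeries in
lemma repOn.hasFPS {f : ℝ → ℝ} {a : ℕ → ℝ} {r : ℝ} (h : repOn f a r) (hr : 0 < r) :
    HasFPowerSeriesOnBall f (ofScalars ℝ a) 0 (ENNReal.ofReal r) := by
  have hrad : ENNReal.ofReal r ≤ (ofScalars ℝ a).radius := by
    apply ENNReal.le_of_forall_nnreal_lt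
    intro ρ hρ
    have hρr : (ρ : ℝ) < r := by
      have := (ENNReal.lt_ofReal_iff_toReal_lt (by simp)).1 hρ
      simpa using this
    have hρ0 : (0:ℝ) ≤ ρ := ρ.2
    have hsum : Summable (fun n : ℕ => a n * (ρ:ℝ) ^ n) :=
      (h (by rwa [abs_of_nonneg hρ0])).summable
    have htend := hsum.tendsto_atTop_zero.abs
    obtain ⟨C, hC⟩ := htend.bddAbove_range
    apply le_radius_of_bound _ C
    intro n
    have := hC (Set.mem_range_self n)
    rw [ofScalars_norm]
    calc ‖a n‖ * (ρ:ℝ) ^ n = |a n * (ρ:ℝ) ^ n| := by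
          rw [Real.norm_eq_abs, abs_mul, abs_pow, abs_of_nonneg hρ0]
      _ ≤ C := this
  refine ⟨hrad, by simpa using hr, ?_⟩
  intro y hy
  rw [EMetric.mem_ball, edist_zero_right] at hy
  have hyr : |y| < r := by
    have := (ENNReal.lt_ofReal_iff_toReal_lt (by simp)).1 hy
    simpa using this
  have := h hyr
  rw [zero_add]
  have e : ∀ n : ℕ, (ofScalars ℝ a n fun _ => y) = a n * y ^ n := fun n => by
    rw [ofScalars_apply_eq, smul_eq_mul]
  simp only [e]
  exact this

lemma repOn.summable_abs {f : ℝ → ℝ} {a : ℕ → ℝ} {r : ℝ} (h : repOn f a r) (hr : 0 < r)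
    {u : ℝ} (hu : |u| < r) : Summable (fun n : ℕ => |a n| * |u| ^ n) := by
  have H := h.hasFPS hr
  have h1 : (‖u‖₊ : ℝ≥0∞) < (FormalMultilinearSeries.ofScalars ℝ a).radius := by
    apply lt_of_lt_of_le _ H.r_le
    rw [ENNReal.lt_ofReal_iff_toReal_lt (by simp)]
    simpa using hu
  have := (FormalMultilinearSeries.ofScalars ℝ a).summable_norm_mul_pow h1
  convert this using 2 with n
  rw [FormalMultilinearSeries.ofScalars_norm, Real.norm_eq_abs]
  simp

lemma repOn.unique {f : ℝ → ℝ} {a b : ℕ → ℝ} {r r' : ℝ} (ha : repOn f a r)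
    (hb : repOn f b r') (hr : 0 < r) (hr' : 0 < r') : a = b := by
  have h1 := (ha.hasFPS hr).hasFPowerSeriesAt
  have h2 := (hb.hasFPS hr').hasFPowerSeriesAt
  exact FormalMultilinearSeries.ofScalars_series_injective (𝕜 := ℝ) (E := ℝ)
    (h1.eq_formalMultilinearSeries h2)

/-! ### Convolution of coefficients -/

noncomputable def conv (a b : ℕ → ℝ) (n : ℕ) : ℝ :=
  ∑ p ∈ Finset.HasAntidiagonal.antidiagonal n, a p.1 * b p.2

noncomputable def convPow (a : ℕ → ℝ) : ℕ → ℕ → ℝ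
  | 0 => fun n => if n = 0 then 1 else 0
  | (k + 1) => conv (convPow a k) a

lemma hasSum_conv_mul {x y : ℕ → ℝ} {w X Y : ℝ}
    (hx : HasSum (fun n : ℕ => x n * w ^ n) X) (hy : HasSum (fun n : ℕ => y n * w ^ n) Y)
    (hx' : Summable fun n : ℕ => |x n| * |w| ^ n) (hy' : Summable fun n : ℕ => |y n| * |w| ^ n) :
    HasSum (fun n : ℕ => conv x y n * w ^ n) (X * Y) := by
  have hx'' : Summable fun n : ℕ => ‖x n * w ^ n‖ := by
    convert hx' using 2 with n
    rw [Real.norm_eq_abs, abs_mul, abs_pow]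
  have hy'' : Summable fun n : ℕ => ‖y n * w ^ n‖ := by
    convert hy' using 2 with n
    rw [Real.norm_eq_abs, abs_mul, abs_pow]
  have key : Summable fun n : ℕ =>
      ∑ kl ∈ Finset.HasAntidiagonal.antidiagonal n, (x kl.1 * w ^ kl.1) * (y kl.2 * w ^ kl.2) :=
    (summable_norm_sum_mul_antidiagonal_of_summable_norm hx'' hy'').of_norm
  have he : ∀ n : ℕ, (∑ kl ∈ Finset.HasAntidiagonal.antidiagonal n,
      (x kl.1 * w ^ kl.1) * (y kl.2 * w ^ kl.2)) = conv x y n * w ^ n := by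
    intro n
    rw [conv, Finset.sum_mul]
    apply Finset.sum_congr rfl
    intro p hp
    have hpn : p.1 + p.2 = n := Finset.HasAntidiagonal.mem_antidiagonal.1 hp
    rw [← hpn, pow_add]
    ring
  have hval : X * Y = ∑' n : ℕ, conv x y n * w ^ n := by
    rw [← hx.tsum_eq, ← hy.tsum_eq,
      tsum_mul_tsum_eq_tsum_sum_antidiagonal_of_summable_norm hx'' hy'']
    exact tsum_congr he
  have : Summable fun n : ℕ => conv x y n * w ^ n := by
    apply key.congr he
  rw [hval]
  exact this.hasSum

lemma repOn.mul {f g : ℝ → ℝ} {a b : ℕ → ℝ} {r : ℝ} (hf : repOn f a r) (hg : repOn g b r)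
    (hr : 0 < r) : repOn (fun u => f u * g u) (conv a b) r := by
  intro u hu
  exact hasSum_conv_mul (hf hu) (hg hu) (hf.summable_abs hr hu) (hg.summable_abs hr hu)

lemma repOn.pow {f : ℝ → ℝ} {a : ℕ → ℝ} {r : ℝ} (hf : repOn f a r) (hr : 0 < r) (k : ℕ) :
    repOn (fun u => f u ^ k) (convPow a k) r := by
  induction k with
  | zero =>
    intro u hu
    have : HasSum (fun n : ℕ => (if n = 0 then (1:ℝ) else 0) * u ^ n) 1 := by
      have h0 := hasSum_single (f := fun n : ℕ => (if n = 0 then (1:ℝ) else 0) * u ^ n) 0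
        (by intro b hb; simp [hb])
      simpa using h0
    simpa [convPow] using this
  | succ k ih =>
    have := (ih.mul hf hr)
    intro u hu
    have h2 := this hu
    simp only [pow_succ]
    exact h2

lemma convPow_eq_zero {a : ℕ → ℝ} (ha : a 0 = 0) : ∀ k m, m < k → convPow a k m = 0 := by
  intro k
  induction k with
  | zero => intro m hm; omega
  | succ k ih =>
    intro m hm
    rw [convPow, conv]
    apply Finset.sum_eq_zero
    intro p hp
    have hpn : p.1 + p.2 = m := Finset.HasAntidiagonal.mem_antidiagonal.1 hp
    rcases Nat.eq_zero_or_pos p.2 with h2 | h2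
    · rw [show p.2 = 0 from h2, ha, mul_zero]
    · have : p.1 < k := by omega
      rw [ih p.1 this, zero_mul]

lemma abs_convPow_le (a : ℕ → ℝ) : ∀ k m, |convPow a k m| ≤ convPow (fun n => |a n|) k m := by
  intro k
  induction k with
  | zero => intro m; simp [convPow]; split <;> simp
  | succ k ih =>
    intro m
    rw [convPow, convPow, conv, conv]
    calc |∑ p ∈ Finset.HasAntidiagonal.antidiagonal m, convPow a k p.1 * a p.2|
        ≤ ∑ p ∈ Finset.HasAntidiagonal.antidiagonal m, |convPow a k p.1 * a p.2| :=
          Finset.abs_sum_le_sum_abs _ _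
      _ ≤ ∑ p ∈ Finset.HasAntidiagonal.antidiagonal m, convPow (fun n => |a n|) k p.1 * |a p.2| := by
          apply Finset.sum_le_sum
          intro p _
          rw [abs_mul]
          exact mul_le_mul_of_nonneg_right (ih p.1) (abs_nonneg _)

lemma convPow_abs_nonneg (a : ℕ → ℝ) : ∀ k m, 0 ≤ convPow (fun n => |a n|) k m := by
  intro k m
  exact le_trans (abs_nonneg _) (abs_convPow_le a k m)

/-- Sum of the absolute convolution power series. -/
lemma hasSum_convPow_abs {a : ℕ → ℝ} {w : ℝ} (hw : 0 ≤ w)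
    (hS : Summable (fun n : ℕ => |a n| * w ^ n)) (k : ℕ) :
    HasSum (fun m : ℕ => convPow (fun n => |a n|) k m * w ^ m)
      ((∑' n : ℕ, |a n| * w ^ n) ^ k) := by
  induction k with
  | zero =>
    have h0 := hasSum_single (f := fun m : ℕ => (if m = 0 then (1:ℝ) else 0) * w ^ m) 0
      (by intro b hb; simp [hb])
    simpa [convPow] using h0
  | succ k ih =>
    have habs : ∀ j m : ℕ, |convPow (fun n => |a n|) j m * w ^ m|
        = convPow (fun n => |a n|) j m * w ^ m := by
      intro j m
      exact abs_of_nonneg (mul_nonneg (convPow_abs_nonneg a j m) (by positivity))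
    have hS' : Summable fun m : ℕ => |convPow (fun n => |a n|) k m| * |w| ^ m := by
      apply ih.summable.congr
      intro m
      rw [abs_of_nonneg hw, abs_of_nonneg (convPow_abs_nonneg a k m)]
    have hSa : Summable fun n : ℕ => |(|a n|)| * |w| ^ n := by
      apply hS.congr
      intro n
      rw [abs_abs, abs_of_nonneg hw]
    rw [convPow, pow_succ]
    exact hasSum_conv_mul ih hS.hasSum hS' hSa


/-! ### Components for chi -/

/-- Coefficients of `(1+(4/3)u)^(l/2)`. -/
noncomputable def β (l p : ℕ) : ℝ := bc ((l : ℝ) / 2) p * (4 / 3) ^ p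

noncomputable def Sq (u : ℝ) : ℝ := Real.sqrt (1 + (4 / 3) * u)

lemma rep_Sq_pow (l : ℕ) : repOn (fun u => Sq u ^ l) (β l) (3 / 4) := by
  intro u hu
  set x := (4 / 3) * u with hxdef
  have hx : |x| < 1 := by
    rw [hxdef, abs_mul, abs_of_pos (show (0:ℝ) < 4/3 by norm_num)]
    calc (4/3) * |u| < (4/3) * (3/4) := by
          apply mul_lt_mul_of_pos_left hu (by norm_num)
      _ = 1 := by norm_num
  have h0 : (0:ℝ) ≤ 1 + x := by
    have := abs_lt.1 hx
    linarith [this.1]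
  have h := hasSum_binomial ((l : ℝ) / 2) hx
  have hval : (1 + x) ^ ((l : ℝ) / 2) = Sq u ^ l := by
    have h1 : Sq u = (1 + x) ^ ((1 : ℝ) / 2) := by
      rw [Sq, ← hxdef, Real.sqrt_eq_rpow]
    rw [h1, ← Real.rpow_natCast ((1 + x) ^ ((1:ℝ)/2)) l, ← Real.rpow_mul h0]
    congr 1
    ring
  have goal : HasSum (fun n : ℕ => β l n * u ^ n) ((1 + x) ^ ((l : ℝ) / 2)) := by
    convert h using 2 with p
    rw [β, hxdef, mul_pow]
    ring
  rw [hval] at goal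
  exact goal

/-- Shift a power series representation by `u^i`. -/
lemma hasSum_shift {c : ℕ → ℝ} {u A : ℝ} (i : ℕ)
    (h : HasSum (fun p : ℕ => c p * u ^ p) A) :
    HasSum (fun m : ℕ => (if i ≤ m then c (m - i) else 0) * u ^ m) (u ^ i * A) := by
  have h2 := h.mul_left (u ^ i)
  have hinj : Function.Injective (fun p : ℕ => p + i) := add_left_injective i
  apply (hinj.hasSum_iff ?_).1
  · have e : ((fun m : ℕ => (if i ≤ m then c (m - i) else 0) * u ^ m) ∘ fun p => p + i)
        = fun p => u ^ i * (c p * u ^ p) := by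
      funext p
      simp only [Function.comp]
      rw [if_pos (by omega : i ≤ p + i)]
      have : p + i - i = p := by omega
      rw [this, pow_add]
      ring
    rw [e]
    exact h2
  · intro m hm
    have : ¬ i ≤ m := by
      intro hle
      exact hm ⟨m - i, by simp; omega⟩
    rw [if_neg this, zero_mul]

noncomputable def Bf (u : ℝ) : ℝ := u / 3 - 1 / 2 + Sq u / 2

/-- Trinomial coefficients of `Bf^k`. -/
noncomputable def ec (k m : ℕ) : ℝ :=
  ∑ i ∈ Finset.range (k + 1), ∑ l ∈ Finset.range (k - i + 1),
    (k.choose i : ℝ) * ((k - i).choose l : ℝ) * (1 / 3) ^ i * (1 / 2) ^ l *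
      (-1 / 2) ^ (k - i - l) * (if i ≤ m then β l (m - i) else 0)

lemma rep_Bf_pow (k : ℕ) : repOn (fun u => Bf u ^ k) (ec k) (3 / 4) := by
  intro u hu
  -- pointwise value of each (i,l) piece
  have hpiece : ∀ i l : ℕ, HasSum
      (fun m : ℕ => (k.choose i : ℝ) * ((k - i).choose l : ℝ) * (1 / 3) ^ i * (1 / 2) ^ l *
        (-1 / 2) ^ (k - i - l) * ((if i ≤ m then β l (m - i) else 0) * u ^ m))
      ((k.choose i : ℝ) * ((k - i).choose l : ℝ) * (1 / 3) ^ i * (1 / 2) ^ l *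
        (-1 / 2) ^ (k - i - l) * (u ^ i * Sq u ^ l)) := by
    intro i l
    exact (hasSum_shift i (rep_Sq_pow l hu)).mul_left _
  have hsum1 : ∀ i : ℕ, HasSum
      (fun m : ℕ => ∑ l ∈ Finset.range (k - i + 1),
        (k.choose i : ℝ) * ((k - i).choose l : ℝ) * (1 / 3) ^ i * (1 / 2) ^ l *
          (-1 / 2) ^ (k - i - l) * ((if i ≤ m then β l (m - i) else 0) * u ^ m))
      (∑ l ∈ Finset.range (k - i + 1),
        (k.choose i : ℝ) * ((k - i).choose l : ℝ) * (1 / 3) ^ i * (1 / 2) ^ l *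
          (-1 / 2) ^ (k - i - l) * (u ^ i * Sq u ^ l)) :=
    fun i => hasSum_sum (fun l _ => hpiece i l)
  have hsum2 : HasSum
      (fun m : ℕ => ∑ i ∈ Finset.range (k + 1), ∑ l ∈ Finset.range (k - i + 1),
        (k.choose i : ℝ) * ((k - i).choose l : ℝ) * (1 / 3) ^ i * (1 / 2) ^ l *
          (-1 / 2) ^ (k - i - l) * ((if i ≤ m then β l (m - i) else 0) * u ^ m))
      (∑ i ∈ Finset.range (k + 1), ∑ l ∈ Finset.range (k - i + 1),
        (k.choose i : ℝ) * ((k - i).choose l : ℝ) * (1 / 3) ^ i * (1 / 2) ^ l *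
          (-1 / 2) ^ (k - i - l) * (u ^ i * Sq u ^ l)) :=
    hasSum_sum (fun i _ => hsum1 i)
  -- identify coefficients
  have hc : ∀ m : ℕ, ec k m * u ^ m = ∑ i ∈ Finset.range (k + 1), ∑ l ∈ Finset.range (k - i + 1),
      (k.choose i : ℝ) * ((k - i).choose l : ℝ) * (1 / 3) ^ i * (1 / 2) ^ l *
        (-1 / 2) ^ (k - i - l) * ((if i ≤ m then β l (m - i) else 0) * u ^ m) := by
    intro m
    rw [ec, Finset.sum_mul]
    apply Finset.sum_congr rfl
    intro i _
    rw [Finset.sum_mul]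
    apply Finset.sum_congr rfl
    intro l _
    ring
  -- identify value via trinomial expansion
  have hv : Bf u ^ k = ∑ i ∈ Finset.range (k + 1), ∑ l ∈ Finset.range (k - i + 1),
      (k.choose i : ℝ) * ((k - i).choose l : ℝ) * (1 / 3) ^ i * (1 / 2) ^ l *
        (-1 / 2) ^ (k - i - l) * (u ^ i * Sq u ^ l) := by
    have hBf : Bf u = u / 3 + (Sq u / 2 + (-1 / 2)) := by rw [Bf]; ring
    rw [hBf, add_pow]
    apply Finset.sum_congr rfl
    intro i _
    rw [add_pow, Finset.mul_sum, Finset.sum_mul]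
    apply Finset.sum_congr rfl
    intro l _
    rw [div_pow, div_pow]
    simp only [one_div, inv_pow]
    ring
  have := hsum2
  rw [← hv] at this
  show HasSum (fun m : ℕ => ec k m * u ^ m) (Bf u ^ k)
  rw [funext hc]
  exact this


lemma rep_Bf : repOn Bf (ec 1) (3 / 4) := by
  intro u hu
  have h := rep_Bf_pow 1 hu
  simpa using h

lemma ec_one_zero : ec 1 0 = 0 := by
  simp [ec, β, bc_zero, Finset.sum_range_succ]
  norm_num

lemma ec_eq (k : ℕ) : ec k = convPow (ec 1) k := by
  exact repOn.unique (rep_Bf_pow k) (rep_Bf.pow (by norm_num) k) (by norm_num) (by norm_num)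

lemma ec_vanish {k m : ℕ} (h : m < k) : ec k m = 0 := by
  rw [ec_eq]
  exact convPow_eq_zero ec_one_zero k m h

lemma abs_Bf_le {u : ℝ} (hu : |u| ≤ 3 / 4) : |Bf u| ≤ |u| := by
  have hab := abs_le.1 hu
  have hnn : (0:ℝ) ≤ 1 + (4 / 3) * u := by linarith [hab.1]
  have hSq : Sq u ^ 2 = 1 + (4 / 3) * u := Real.sq_sqrt hnn
  have hSqnn : 0 ≤ Sq u := Real.sqrt_nonneg _
  have h1 : |Sq u - 1| ≤ (4 / 3) * |u| := by
    have key : (Sq u - 1) * (Sq u + 1) = (4 / 3) * u := by nlinarith [hSq]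
    have h2 : |Sq u - 1| * (Sq u + 1) = (4 / 3) * |u| := by
      rw [← abs_of_pos (show (0:ℝ) < Sq u + 1 by linarith), ← abs_mul, key, abs_mul,
        abs_of_pos (show (0:ℝ) < (4:ℝ)/3 by norm_num)]
    nlinarith [abs_nonneg (Sq u - 1)]
  have hrw : Bf u = u / 3 + (Sq u - 1) / 2 := by rw [Bf]; ring
  calc |Bf u| = |u / 3 + (Sq u - 1) / 2| := by rw [hrw]
    _ ≤ |u / 3| + |(Sq u - 1) / 2| := abs_add_le _ _
    _ = |u| / 3 + |Sq u - 1| / 2 := by rw [abs_div, abs_div]; norm_num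
    _ ≤ |u| / 3 + ((4 / 3) * |u|) / 2 := by linarith
    _ = |u| := by ring

noncomputable def Mq : ℝ := ∑' p : ℕ, |ec 1 p| * (1 / 2) ^ p

lemma summable_b_half : Summable (fun p : ℕ => |ec 1 p| * (1 / 2) ^ p) := by
  have h := rep_Bf.summable_abs (by norm_num) (u := 1 / 2)
    (by rw [abs_of_pos (show (0:ℝ) < 1/2 by norm_num)]; norm_num)
  have he : |(1:ℝ)/2| = 1/2 := abs_of_pos (by norm_num)
  rw [he] at h
  exact h

lemma Mq_nonneg : 0 ≤ Mq :=
  tsum_nonneg fun p => mul_nonneg (abs_nonneg _) (by positivity)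

noncomputable def w₀ : ℝ := 1 / (2 * (Mq + 1))

lemma w0_pos : 0 < w₀ := by
  have := Mq_nonneg
  rw [w₀]
  positivity

lemma w0_le_half : w₀ ≤ 1 / 2 := by
  have := Mq_nonneg
  rw [w₀, div_le_div_iff₀ (by positivity) (by norm_num)]
  nlinarith

lemma Q_lt_one {w : ℝ} (h0 : 0 ≤ w) (hw : w < w₀) : (∑' p : ℕ, |ec 1 p| * w ^ p) < 1 := by
  have hw12 : w < 1 / 2 := lt_of_lt_of_le hw w0_le_half
  have hsw : Summable (fun p : ℕ => |ec 1 p| * w ^ p) := by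
    have h := rep_Bf.summable_abs (by norm_num) (u := w) (by rw [abs_of_nonneg h0]; linarith)
    convert h using 2 with p
    rw [abs_of_nonneg h0]
  have hbound : ∀ p : ℕ, |ec 1 p| * w ^ p ≤ (2 * w) * (|ec 1 p| * (1 / 2) ^ p) := by
    intro p
    cases p with
    | zero => simp [ec_one_zero]
    | succ q =>
      have hwq : w ^ (q + 1) ≤ (2 * w) * (1 / 2) ^ (q + 1) := by
        have h1 : w ^ (q + 1) = w * w ^ q := by rw [pow_succ]; ring
        have h2 : w ^ q ≤ (1 / 2) ^ q := pow_le_pow_left₀ h0 hw12.le q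
        have h3 : (2 * w) * (1 / 2) ^ (q + 1) = w * (1 / 2) ^ q := by
          rw [pow_succ]; ring
        rw [h1, h3]
        exact mul_le_mul_of_nonneg_left h2 h0
      calc |ec 1 (q+1)| * w ^ (q+1) ≤ |ec 1 (q+1)| * ((2 * w) * (1/2) ^ (q+1)) :=
            mul_le_mul_of_nonneg_left hwq (abs_nonneg _)
        _ = (2 * w) * (|ec 1 (q+1)| * (1/2) ^ (q+1)) := by ring
  have hle : (∑' p : ℕ, |ec 1 p| * w ^ p) ≤ (2 * w) * Mq := by
    rw [Mq, ← tsum_mul_left]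
    exact Summable.tsum_le_tsum hbound hsw (summable_b_half.mul_left _)
  have hfin : (2 * w) * Mq < 1 := by
    have h1 : (2 * w) * Mq ≤ (2 * w₀) * Mq := by
      apply mul_le_mul_of_nonneg_right _ Mq_nonneg
      linarith
    have h2 : (2 * w₀) * Mq = Mq / (Mq + 1) := by
      rw [w₀]
      field_simp
    have h3 : Mq / (Mq + 1) < 1 := by
      rw [div_lt_one (by nlinarith [Mq_nonneg])]
      linarith [Mq_nonneg]
    linarith
  linarith

noncomputable def ψ (u : ℝ) : ℝ := (1 + Bf u) ^ ((1 : ℝ) / 3)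

noncomputable def Dc (m : ℕ) : ℝ := ∑ k ∈ Finset.range (m + 1), bc (1 / 3) k * ec k m

lemma rep_psi : repOn ψ Dc w₀ := by
  intro u hu
  have huh : |u| < 1 / 2 := lt_of_lt_of_le hu w0_le_half
  have hu34 : |u| < 3 / 4 := by linarith
  have hBu : |Bf u| < 1 := lt_of_le_of_lt (abs_Bf_le hu34.le) (by linarith)
  have houter := hasSum_binomial (1 / 3 : ℝ) hBu
  have hinner : ∀ k, HasSum (fun m : ℕ => ec k m * u ^ m) (Bf u ^ k) := fun k => rep_Bf_pow k hu34
  have hSb : Summable (fun p : ℕ => |ec 1 p| * |u| ^ p) :=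
    rep_Bf.summable_abs (by norm_num) hu34
  set Q := ∑' p : ℕ, |ec 1 p| * |u| ^ p with hQdef
  have hQ1 : Q < 1 := Q_lt_one (abs_nonneg u) hu
  have hQ0 : 0 ≤ Q := tsum_nonneg fun p => mul_nonneg (abs_nonneg _) (by positivity)
  have hG : ∀ k, HasSum (fun m : ℕ => convPow (fun p => |ec 1 p|) k m * |u| ^ m) (Q ^ k) :=
    fun k => hasSum_convPow_abs (abs_nonneg u) hSb k
  have hGsum : Summable (fun km : ℕ × ℕ =>
      convPow (fun p => |ec 1 p|) km.1 km.2 * |u| ^ km.2) := by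
    apply (summable_prod_of_nonneg ?_).2
    constructor
    · intro k
      exact (hG k).summable
    · apply Summable.congr (summable_geometric_of_lt_one hQ0 hQ1)
      intro k
      exact ((hG k).tsum_eq).symm
    · intro km
      exact mul_nonneg (convPow_abs_nonneg _ _ _) (by positivity)
  have hF : Summable (fun km : ℕ × ℕ => bc (1 / 3) km.1 * (ec km.1 km.2 * u ^ km.2)) := by
    apply Summable.of_norm_bounded hGsum
    intro km
    rw [Real.norm_eq_abs, abs_mul, abs_mul, abs_pow]
    calc |bc (1/3) km.1| * (|ec km.1 km.2| * |u| ^ km.2)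
        ≤ 1 * (convPow (fun p => |ec 1 p|) km.1 km.2 * |u| ^ km.2) := by
          apply mul_le_mul (abs_bc_le_one (by rw [abs_of_pos] <;> norm_num) km.1)
            (mul_le_mul_of_nonneg_right ?_ (by positivity))
            (mul_nonneg (abs_nonneg _) (by positivity)) zero_le_one
          rw [ec_eq km.1]
          exact abs_convPow_le _ _ _
      _ = convPow (fun p => |ec 1 p|) km.1 km.2 * |u| ^ km.2 := one_mul _
  have hfiber : ∀ k, HasSum (fun m : ℕ => bc (1/3) k * (ec k m * u ^ m))
      (bc (1/3) k * Bf u ^ k) := fun k => (hinner k).mul_left _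
  have htsum : ∑' km : ℕ × ℕ, bc (1/3) km.1 * (ec km.1 km.2 * u ^ km.2)
      = (1 + Bf u) ^ ((1 : ℝ) / 3) := by
    rw [hF.tsum_prod' fun k => (hfiber k).summable]
    calc ∑' k : ℕ, ∑' m : ℕ, bc (1/3) k * (ec k m * u ^ m)
        = ∑' k : ℕ, bc (1/3) k * Bf u ^ k := tsum_congr fun k => (hfiber k).tsum_eq
      _ = (1 + Bf u) ^ ((1 : ℝ) / 3) := houter.tsum_eq
  have hFS : HasSum (fun km : ℕ × ℕ => bc (1/3) km.1 * (ec km.1 km.2 * u ^ km.2))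
      ((1 + Bf u) ^ ((1 : ℝ) / 3)) := htsum ▸ hF.hasSum
  have hswap : HasSum (fun mk : ℕ × ℕ => bc (1/3) mk.2 * (ec mk.2 mk.1 * u ^ mk.1))
      ((1 + Bf u) ^ ((1 : ℝ) / 3)) := by
    have h := ((Equiv.prodComm ℕ ℕ).hasSum_iff).2 hFS
    exact h
  have hfib2 : ∀ m, HasSum (fun k : ℕ => bc (1/3) k * (ec k m * u ^ m)) (Dc m * u ^ m) := by
    intro m
    have hz : ∀ k ∉ Finset.range (m + 1), bc (1/3) k * (ec k m * u ^ m) = 0 := by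
      intro k hk
      have hmk : m < k := by
        simpa [Finset.mem_range] using hk
      rw [ec_vanish hmk]
      ring
    have hfin : HasSum (fun k : ℕ => bc (1/3) k * (ec k m * u ^ m))
        (∑ k ∈ Finset.range (m + 1), bc (1/3) k * (ec k m * u ^ m)) :=
      hasSum_sum_of_ne_finset_zero hz
    have hval : (∑ k ∈ Finset.range (m + 1), bc (1/3) k * (ec k m * u ^ m)) = Dc m * u ^ m := by
      rw [Dc, Finset.sum_mul]
      apply Finset.sum_congr rfl
      intro k _
      ring
    rw [hval] at hfin
    exact hfin
  exact hswap.prod_fiberwise hfib2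


/-! ### chi itself -/

noncomputable def Cc (n : ℕ) : ℝ :=
  if 3 ∣ n then (6 : ℝ) ^ ((1 : ℝ) / 3) * Dc (n / 3) else 0

lemma chi_eq_psi {t : ℝ} (ht : |t| ≤ 1 / 2) :
    chiFun t = (6 : ℝ) ^ ((1 : ℝ) / 3) * ψ (t ^ 3) := by
  have ht3 : |t ^ 3| ≤ 1 / 8 := by
    rw [abs_pow]
    calc |t| ^ 3 ≤ (1 / 2) ^ 3 := pow_le_pow_left₀ (abs_nonneg t) ht 3
      _ = 1 / 8 := by norm_num
  have hB : |Bf (t ^ 3)| ≤ |t ^ 3| := abs_Bf_le (by linarith)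
  have habB := abs_le.1 (le_trans hB ht3)
  have hab3 := abs_le.1 ht3
  have hX : (0:ℝ) ≤ 1 + Bf (t ^ 3) := by linarith [habB.1]
  have h34 : (0:ℝ) ≤ 3 + 4 * t ^ 3 := by linarith [hab3.1]
  have hsqrt : Real.sqrt 3 * Real.sqrt (3 + 4 * t ^ 3) = 3 * Sq (t ^ 3) := by
    rw [← Real.sqrt_mul (by norm_num : (0:ℝ) ≤ 3)]
    have h9 : (3:ℝ) * (3 + 4 * t ^ 3) = 3 ^ 2 * (1 + (4 / 3) * t ^ 3) := by ring
    rw [h9, Real.sqrt_mul (by positivity), Real.sqrt_sq (by norm_num)]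
    rfl
  have hbase : 3 + 2 * t ^ 3 + Real.sqrt 3 * Real.sqrt (3 + 4 * t ^ 3)
      = 6 * (1 + Bf (t ^ 3)) := by
    rw [hsqrt, Bf]
    ring
  rw [chiFun, hbase, Real.mul_rpow (by norm_num) hX]
  rfl

lemma rep_chi : repOn chiFun Cc w₀ := by
  intro t ht
  have ht12 : |t| < 1 / 2 := lt_of_lt_of_le ht w0_le_half
  have h3 : |t ^ 3| < w₀ := by
    rw [abs_pow]
    calc |t| ^ 3 ≤ |t| ^ 1 := pow_le_pow_of_le_one (abs_nonneg t) (by linarith) (by norm_num)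
      _ = |t| := pow_one _
      _ < w₀ := ht
  have hpsi := rep_psi h3
  have h6 := hpsi.mul_left ((6 : ℝ) ^ ((1 : ℝ) / 3))
  rw [← chi_eq_psi ht12.le] at h6
  have hinj : Function.Injective (fun m : ℕ => 3 * m) :=
    mul_right_injective₀ (by norm_num : (3:ℕ) ≠ 0)
  apply (hinj.hasSum_iff ?_).1
  · have e : ((fun n : ℕ => Cc n * t ^ n) ∘ fun m : ℕ => 3 * m)
        = fun m => (6 : ℝ) ^ ((1 : ℝ) / 3) * (Dc m * (t ^ 3) ^ m) := by
      funext m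
      simp only [Function.comp]
      rw [Cc, if_pos ⟨m, rfl⟩, Nat.mul_div_cancel_left _ (by norm_num : 0 < 3), pow_mul]
      ring
    rw [e]
    exact h6
  · intro n hn
    have hnd : ¬ (3 ∣ n) := by
      intro ⟨m, hm⟩
      exact hn ⟨m, hm.symm⟩
    rw [Cc, if_neg hnd, zero_mul]

lemma fallFac_zero_left {m : ℕ} (hm : 1 ≤ m) : fallFac 0 m = 0 := by
  apply Finset.prod_eq_zero (Finset.mem_range.2 hm)
  simp

lemma ec_zero_pos {m : ℕ} (hm : 1 ≤ m) : ec 0 m = 0 := by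
  simp [ec, β, bc, fallFac_zero_left hm]

lemma Dc_identity {m : ℕ} (hm : 1 ≤ m) :
    ((3 * m).factorial : ℝ) * ((6 : ℝ) ^ ((1 : ℝ) / 3) * Dc m) = chiDerivVal m := by
  rw [chiDerivVal]
  rw [show ((3 * m).factorial : ℝ) * ((6 : ℝ) ^ ((1 : ℝ) / 3) * Dc m)
    = (6 : ℝ) ^ ((1 : ℝ) / 3) * (((3 * m).factorial : ℝ) * Dc m) from by ring]
  congr 1
  -- split off k = 0
  have hins : Finset.range (m + 1) = insert 0 (Finset.Icc 1 m) := by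
    ext x
    simp only [Finset.mem_range, Finset.mem_insert, Finset.mem_Icc]
    omega
  rw [Dc, hins, Finset.sum_insert (by simp)]
  rw [ec_zero_pos hm, mul_zero, zero_add, Finset.mul_sum]
  apply Finset.sum_congr rfl
  intro k hk
  obtain ⟨hk1, hkm⟩ := Finset.mem_Icc.1 hk
  simp only [ec, Finset.mul_sum]
  apply Finset.sum_congr rfl
  intro i hi
  have hik : i ≤ k := by simpa [Nat.lt_succ_iff] using Finset.mem_range.1 hi
  apply Finset.sum_congr rfl
  intro l hl
  have hlk : l ≤ k - i := by simpa [Nat.lt_succ_iff] using Finset.mem_range.1 hl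
  have him : i ≤ m := le_trans hik hkm
  rw [if_pos him]
  -- now a pure algebraic identity
  set j := k - i - l with hjdef
  have hk_eq : i + (l + j) = k := by omega
  rw [Nat.cast_choose ℝ hik, Nat.cast_choose ℝ hlk, bc, β, bc, hFun,
    zpow_natCast, zpow_natCast]
  have hkil : k - i - l = j := rfl
  have hki : k - i = l + j := by omega
  rw [hkil, hki]
  have hfk : (k.factorial : ℝ) ≠ 0 := Nat.cast_ne_zero.2 k.factorial_ne_zero
  have hfi : (i.factorial : ℝ) ≠ 0 := Nat.cast_ne_zero.2 i.factorial_ne_zero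
  have hfl : (l.factorial : ℝ) ≠ 0 := Nat.cast_ne_zero.2 l.factorial_ne_zero
  have hfj : (j.factorial : ℝ) ≠ 0 := Nat.cast_ne_zero.2 j.factorial_ne_zero
  have hfmi : ((m - i).factorial : ℝ) ≠ 0 := Nat.cast_ne_zero.2 (m - i).factorial_ne_zero
  have hflj : ((l + j).factorial : ℝ) ≠ 0 := Nat.cast_ne_zero.2 (l + j).factorial_ne_zero
  have h2k : (2:ℝ) ^ k = 2 ^ i * (2 ^ l * 2 ^ j) := by
    rw [← pow_add, ← pow_add, hk_eq]
  have hhalfj : ((-1:ℝ) / 2) ^ j = (-1) ^ j / 2 ^ j := div_pow _ _ j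
  have hhalfl : ((1:ℝ) / 2) ^ l = 1 / 2 ^ l := by rw [div_pow, one_pow]
  have hthird : ((1:ℝ) / 3) ^ i = 1 / 3 ^ i := by rw [div_pow, one_pow]
  rw [hhalfj, hhalfl, hthird, h2k]
  have h2i : (2:ℝ) ^ i ≠ 0 := by positivity
  have h2l : (2:ℝ) ^ l ≠ 0 := by positivity
  have h2j : (2:ℝ) ^ j ≠ 0 := by positivity
  have h3i : (3:ℝ) ^ i ≠ 0 := by positivity
  field_simp

theorem stmt2_aux :
    (∃ U ∈ nhds (0 : ℝ), ContDiffOn ℝ (⊤ : ℕ∞) chiFun U) ∧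
    (∀ m : ℕ, 1 ≤ m → iteratedDeriv (3 * m) chiFun 0 = chiDerivVal m) ∧
    (∀ n : ℕ, 1 ≤ n → ¬ (3 ∣ n) → iteratedDeriv n chiFun 0 = 0) := by
  have H := rep_chi.hasFPS w0_pos
  have hder : ∀ n : ℕ, iteratedDeriv n chiFun 0 = (n.factorial : ℝ) * Cc n := by
    intro n
    have h1 := H.factorial_smul (1 : ℝ) n
    rw [iteratedDeriv_eq_iteratedFDeriv, ← h1, FormalMultilinearSeries.ofScalars_apply_eq]
    simp
  refine ⟨⟨EMetric.ball 0 (ENNReal.ofReal w₀), ?_, ?_⟩, ?_, ?_⟩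
  · exact EMetric.ball_mem_nhds _ (by simp [ENNReal.ofReal_pos, w0_pos])
  · exact H.analyticOnNhd.contDiffOn_of_completeSpace
  · intro m hm
    rw [hder (3 * m), Cc, if_pos ⟨m, rfl⟩, Nat.mul_div_cancel_left _ (by norm_num : 0 < 3)]
    exact Dc_identity hm
  · intro n _ h3
    rw [hder n, Cc, if_neg h3, mul_zero]

end ChiAux

theorem stmt2 :
    (∃ U ∈ nhds (0 : ℝ), ContDiffOn ℝ (⊤ : ℕ∞) chiFun U) ∧
    (∀ m : ℕ, 1 ≤ m → iteratedDeriv (3 * m) chiFun 0 = chiDerivVal m) ∧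
    (∀ n : ℕ, 1 ≤ n → ¬ (3 ∣ n) → iteratedDeriv n chiFun 0 = 0) := by
  exact ChiAux.stmt2_aux
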